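/- arXiv:1003.5944 — 2 statements merged into one kernel-verified Lean document; each statement's English description precedes it below -/
import Mathlib

section
/- Let X be a simplicial set and suppose x = yε where x ∈ X_n, y is a nondegenerate simplex of X, and ε is an epimorphism of Δ with domain [n]. Then an ordinal i with 0 ≤ i ≤ n−1 properly reduces x if and only if ε(i) = ε(i+1). -/
/-!
Write `t = σᵢ ≫ δᵢ`, the endomorphism of `[n+1]` sending `i` to `i+1` and fixing everything
else. Then `i` properly reduces `x = y ε` iff `y (t ≫ ε) = y ε`. A nondegenerate simplex
determines the epimorphism along which it is degenerated: every point `j` lies on some section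
`s` of `ε`, and `y (s ≫ ε') = y (s ≫ ε) = y` forces `s ≫ ε' = 𝟙`, since a non-identity
endomorphism of `[m]` factors through a codegeneracy. Hence the condition is `t ≫ ε = ε`,
i.e. `ε i = ε (i+1)`.
-/

open CategoryTheory Simplicial

namespace AufhebungSSet

/-- An `n`-simplex `x` of a simplicial set `X` is degenerate if it is the image of a
simplex of strictly smaller dimension under the action of an epimorphism of `Δ`. -/
def IsDegen (X : SSet) {n : ℕ} (x : X _⦋n⦌) : Prop :=
  ∃ m : ℕ, m < n ∧ ∃ ε : (⦋n⦌ : SimplexCategory) ⟶ ⦋m⦌,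
    Function.Surjective ε.toOrderHom ∧ ∃ y : X _⦋m⦌, x = X.map ε.op y

/-- The degeneracy `dgn x = n - k`, where `k` is the least dimension from which `x`
is the image of a simplex under the action of an epimorphism; by the Eilenberg–Zilber
lemma this is the dimension of the nondegenerate simplex of which `x` is a degeneracy. -/
noncomputable def dgn (X : SSet) {n : ℕ} (x : X _⦋n⦌) : ℕ :=
  n - sInf (Set.ofPred fun k : ℕ => ∃ ε : (⦋n⦌ : SimplexCategory) ⟶ ⦋k⦌,
    Function.Surjective ε.toOrderHom ∧ ∃ y : X _⦋k⦌, x = X.map ε.op y)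

/-- `i` reduces `x` when `dgn (x δᵢ) = dgn x - 1`. -/
def Reduces (X : SSet) {n : ℕ} (i : Fin (n + 2)) (x : X _⦋n + 1⦌) : Prop :=
  dgn X (X.map (SimplexCategory.δ i).op x) + 1 = dgn X x

/-- `i` properly reduces `x` when `x = x δᵢ σᵢ`. -/
def ProperlyReduces (X : SSet) {n : ℕ} (i : Fin (n + 1)) (x : X _⦋n + 1⦌) : Prop :=
  x = X.map (SimplexCategory.σ i).op (X.map (SimplexCategory.δ i.castSucc).op x)

/-- A `(K+2)`-sphere: a family `c₀, …, c_{K+2}` of `(K+1)`-simplices satisfying the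
cycle equations `cⱼ δᵢ = cᵢ δ_{j-1}` for `i < j` (here reindexed: `c_{j+1} δᵢ = cᵢ δⱼ`
for `i ≤ j`). -/
def IsSphere (X : SSet) {K : ℕ} (c : Fin (K + 3) → X _⦋K + 1⦌) : Prop :=
  ∀ i j : Fin (K + 2), i ≤ j →
    X.map (SimplexCategory.δ i).op (c j.succ) = X.map (SimplexCategory.δ j).op (c i.castSucc)

/-- `y` fills the sphere `c` when `y δᵢ = cᵢ` for all `i`. -/
def IsFiller (X : SSet) {K : ℕ} (y : X _⦋K + 2⦌) (c : Fin (K + 3) → X _⦋K + 1⦌) : Prop :=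
  ∀ i : Fin (K + 3), X.map (SimplexCategory.δ i).op y = c i

open SimplexCategory

lemma σ_comp_δ_castSucc_apply {n : ℕ} (i : Fin (n + 1)) (j : Fin (n + 2)) :
    (σ i ≫ δ i.castSucc).toOrderHom j = if j = i.castSucc then i.succ else j := by
  change i.castSucc.succAbove (i.predAbove j) = _
  split_ifs with h
  · simp [h, Fin.predAbove_castSucc_self, Fin.succAbove_castSucc_self]
  · exact Fin.succAbove_predAbove h

lemma σ_comp_δ_castSucc_comp_eq_iff {n : ℕ} {Δ' : SimplexCategory} (i : Fin (n + 1))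
    (θ : ⦋n + 1⦌ ⟶ Δ') :
    (σ i ≫ δ i.castSucc) ≫ θ = θ ↔ θ.toOrderHom i.castSucc = θ.toOrderHom i.succ := by
  constructor
  · intro h
    calc θ.toOrderHom i.castSucc = ((σ i ≫ δ i.castSucc) ≫ θ).toOrderHom i.castSucc := by rw [h]
      _ = θ.toOrderHom i.succ := by
        change θ.toOrderHom ((σ i ≫ δ i.castSucc).toOrderHom i.castSucc) = _
        rw [σ_comp_δ_castSucc_apply, if_pos rfl]
  · intro h
    ext j : 3
    change θ.toOrderHom ((σ i ≫ δ i.castSucc).toOrderHom j) = θ.toOrderHom j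
    rw [σ_comp_δ_castSucc_apply]
    split_ifs with hj
    · rw [hj, h]
    · rfl

lemma exists_section_apply_eq {n m : ℕ} (ε : (⦋n⦌ : SimplexCategory) ⟶ ⦋m⦌)
    (hε : Function.Surjective ε.toOrderHom) (j : Fin (n + 1)) :
    ∃ s : (⦋m⦌ : SimplexCategory) ⟶ ⦋n⦌, s ≫ ε = 𝟙 _ ∧ s.toOrderHom (ε.toOrderHom j) = j := by
  classical
  let f : Fin (m + 1) → Fin (n + 1) := fun v =>
    if v = ε.toOrderHom j then j else Function.surjInv hε v
  have hf : ∀ v, ε.toOrderHom (f v) = v := fun v => by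
    unfold f
    split_ifs with hv
    · exact hv.symm
    · exact Function.surjInv_eq hε v
  -- any set-theoretic section of a monotone map is monotone
  have hmono : Monotone f := fun v w hvw =>
    hvw.eq_or_lt.elim (fun h => h ▸ le_rfl)
      fun h => (ε.toOrderHom.monotone.reflect_lt (by rwa [hf, hf])).le
  refine ⟨mkHom ⟨f, hmono⟩, ?_, if_pos rfl⟩
  ext v : 3
  exact hf v

lemma eq_id_of_map_eq_self {X : SSet} {m : ℕ} {y : X _⦋m⦌} (hy : ¬ IsDegen X y)
    (g : (⦋m⦌ : SimplexCategory) ⟶ ⦋m⦌) (hg : X.map g.op y = y) : g = 𝟙 _ := by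
  by_cases hinj : Function.Injective g.toOrderHom
  · have : Mono g := mono_iff_injective.2 hinj
    exact eq_id_of_mono g
  cases m with
  | zero => exact absurd (fun a b _ => Subsingleton.elim (α := Fin 1) a b) hinj
  | succ k =>
    obtain ⟨i, g', rfl⟩ := eq_σ_comp_of_not_injective g hinj
    refine absurd ⟨k, k.lt_succ_self, σ i, epi_iff_surjective.1 inferInstance,
      X.map g'.op y, ?_⟩ hy
    conv_lhs => rw [← hg]
    rw [op_comp, X.map_comp]
    rfl

lemma eq_of_map_eq_map {X : SSet} {n m : ℕ} {y : X _⦋m⦌} (hy : ¬ IsDegen X y)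
    {ε : (⦋n⦌ : SimplexCategory) ⟶ ⦋m⦌} (hε : Function.Surjective ε.toOrderHom)
    {ε' : (⦋n⦌ : SimplexCategory) ⟶ ⦋m⦌} (h : X.map ε.op y = X.map ε'.op y) : ε = ε' := by
  ext j : 3
  obtain ⟨s, hs, hsj⟩ := exists_section_apply_eq ε hε j
  have hid : s ≫ ε' = 𝟙 _ := by
    refine eq_id_of_map_eq_self hy _ ?_
    rw [op_comp, Functor.map_comp_apply, ← h, ← Functor.map_comp_apply,
      ← op_comp, hs, op_id, Functor.map_id_apply]
  calc ε.toOrderHom j = (s ≫ ε').toOrderHom (ε.toOrderHom j) := by rw [hid]; rfl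
    _ = ε'.toOrderHom j := congrArg ε'.toOrderHom hsj

/-- If `x = y ε` with `y` nondegenerate and `ε` an epimorphism, then `i` properly
reduces `x` precisely when `ε i = ε (i + 1)`. -/
theorem properlyReduces_iff_epi_eq (X : SSet) (n m : ℕ) (x : X _⦋n + 1⦌) (y : X _⦋m⦌)
    (ε : (⦋n + 1⦌ : SimplexCategory) ⟶ ⦋m⦌) (hε : Function.Surjective ε.toOrderHom)
    (hy : ¬ IsDegen X y) (hx : x = X.map ε.op y) (i : Fin (n + 1)) :
    ProperlyReduces X i x ↔ ε.toOrderHom i.castSucc = ε.toOrderHom i.succ := by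
  have hmap : X.map (σ i).op (X.map (δ i.castSucc).op x)
      = X.map ((σ i ≫ δ i.castSucc) ≫ ε).op y := by
    rw [hx, op_comp, op_comp, X.map_comp, X.map_comp]
    rfl
  rw [ProperlyReduces, hmap, hx, ← σ_comp_δ_castSucc_comp_eq_iff]
  exact ⟨fun h => (eq_of_map_eq_map hy hε h).symm, fun h => by rw [h]⟩

end AufhebungSSet
end

section
/- Let X be a simplicial set and let c be a k-sphere in X (k ≥ 1) whose faces c_0, …, c_k all have degeneracy at least 2. Let r be the minimal value of dgn(c_i) over 0 ≤ i ≤ k and let m be the smallest ordinal with dgn(c_m) = r. If some ordinal j properly reduces both c_m and c_{m+1}, then c_m = c_{m+1}. -/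
open CategoryTheory Simplicial

namespace AufhebungSSet

/-!
Write `y = c_m δ_j`, so that `c_m = y σ_j` and `dgn y = r - 1`; it suffices to show `c_{m+1} δ_j = y`.
For `j = m` and `j + 1 = m` this is a single cycle equation. Otherwise the cycle equations present
`y` and `c_{m+1} δ_j` as adjacent faces `w δ_M`, `w δ_{M+1}` of one face `w` of the sphere, while
`w δ_{M-1}` is a face of `c_{m-1}`. Deleting vertex `M` lowers the degeneracy of `w` (from at least
`r` to `r - 1`), so writing `w = z ε` with `ε` an epimorphism onto the smallest possible `[k]`, `ε`
must identify `M` with a neighbour. That neighbour is not `M - 1`: otherwise `c_{m-1}` would have a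
face of degeneracy `r - 1`, hence degeneracy at most `r`, against the minimality of `m`.
-/

open SimplexCategory

theorem Monotone.exists_adjacent_eq {α : Type*} [PartialOrder α] {n : ℕ} {f : Fin (n + 2) → α}
    (hf : Monotone f) {i M : Fin (n + 2)} (hiM : i ≠ M) (h : f i = f M) :
    ∃ t : Fin (n + 1), (t.castSucc = M ∨ t.succ = M) ∧ f t.castSucc = f t.succ := by
  rcases hiM.lt_or_gt with hlt | hgt
  · obtain ⟨t, rfl⟩ := Fin.exists_succ_eq.mpr (Fin.ne_zero_of_lt hlt)
    refine ⟨t, .inr rfl, le_antisymm (hf Fin.castSucc_lt_succ.le) ?_⟩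
    exact h ▸ hf (Fin.le_castSucc_iff.mpr hlt)
  · obtain ⟨t, rfl⟩ := Fin.exists_castSucc_eq.mpr (Fin.ne_last_of_lt hgt)
    refine ⟨t, .inl rfl, le_antisymm (hf Fin.castSucc_lt_succ.le) ?_⟩
    exact h ▸ hf (Fin.castSucc_lt_iff_succ_le.mp hgt)

section

variable {X : SSet}

theorem map_op_comp_apply {a b d : SimplexCategory} (f : a ⟶ b) (g : b ⟶ d) (x : X.obj (.op d)) :
    X.map (f ≫ g).op x = X.map f.op (X.map g.op x) := by
  rw [op_comp, Functor.map_comp_apply]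

def epiDims (X : SSet) {n : ℕ} (x : X _⦋n⦌) : Set ℕ :=
  Set.ofPred fun k : ℕ => ∃ ε : (⦋n⦌ : SimplexCategory) ⟶ ⦋k⦌,
    Function.Surjective ε.toOrderHom ∧ ∃ y : X _⦋k⦌, x = X.map ε.op y

noncomputable def baseDim (X : SSet) {n : ℕ} (x : X _⦋n⦌) : ℕ :=
  sInf (epiDims X x)

theorem dgn_eq_sub_baseDim {n : ℕ} (x : X _⦋n⦌) : dgn X x = n - baseDim X x := rfl

theorem self_mem_epiDims {n : ℕ} (x : X _⦋n⦌) : n ∈ epiDims X x :=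
  ⟨𝟙 _, fun b => ⟨b, rfl⟩, x, by simp⟩

theorem baseDim_le {n : ℕ} (x : X _⦋n⦌) : baseDim X x ≤ n :=
  Nat.sInf_le (self_mem_epiDims x)

theorem exists_eq_map_baseDim {n : ℕ} (x : X _⦋n⦌) :
    ∃ ε : (⦋n⦌ : SimplexCategory) ⟶ ⦋baseDim X x⦌,
      Function.Surjective ε.toOrderHom ∧ ∃ z, x = X.map ε.op z :=
  Nat.sInf_mem ⟨n, self_mem_epiDims x⟩

theorem baseDim_le_of_eq_map {n k : ℕ} {x : X _⦋n⦌} (θ : ⦋n⦌ ⟶ ⦋k⦌) (z : X _⦋k⦌)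
    (hx : x = X.map θ.op z) : baseDim X x ≤ k := by
  induction k with
  | zero => exact Nat.sInf_le ⟨θ, fun _ => ⟨0, Subsingleton.elim (α := Fin 1) _ _⟩, z, hx⟩
  | succ k ih =>
    by_cases hθ : Function.Surjective θ.toOrderHom
    · exact Nat.sInf_le ⟨θ, hθ, z, hx⟩
    · obtain ⟨i, θ', rfl⟩ := eq_comp_δ_of_not_surjective θ hθ
      exact (ih θ' _ (by rw [hx, map_op_comp_apply])).trans k.le_succ

theorem baseDim_lt_of_eq_map {n k : ℕ} {x : X _⦋n⦌} (θ : ⦋n⦌ ⟶ ⦋k⦌) (z : X _⦋k⦌)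
    (hx : x = X.map θ.op z) (hθ : ¬Function.Surjective θ.toOrderHom) : baseDim X x < k := by
  cases k with
  | zero => exact absurd (fun _ => ⟨0, Subsingleton.elim (α := Fin 1) _ _⟩) hθ
  | succ k =>
    obtain ⟨i, θ', rfl⟩ := eq_comp_δ_of_not_surjective θ hθ
    exact Nat.lt_succ_of_le (baseDim_le_of_eq_map θ' _ (by rw [hx, map_op_comp_apply]))

theorem baseDim_map_le {m n : ℕ} (θ : ⦋m⦌ ⟶ ⦋n⦌) (x : X _⦋n⦌) :
    baseDim X (X.map θ.op x) ≤ baseDim X x := by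
  obtain ⟨ε, -, z, hz⟩ := exists_eq_map_baseDim x
  exact baseDim_le_of_eq_map (θ ≫ ε) z (by rw [map_op_comp_apply, ← hz])

theorem dgn_le_dgn_map_δ_add_one {n : ℕ} (x : X _⦋n + 1⦌) (i : Fin (n + 2)) :
    dgn X x ≤ dgn X (X.map (δ i).op x) + 1 := by
  have := baseDim_map_le (δ i) x
  rw [dgn_eq_sub_baseDim, dgn_eq_sub_baseDim]
  omega

theorem ProperlyReduces.reduces {n : ℕ} {i : Fin (n + 1)} {x : X _⦋n + 1⦌}
    (h : ProperlyReduces X i x) : Reduces X i.castSucc x := by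
  have hσ := baseDim_map_le (σ i) (X.map (δ i.castSucc).op x)
  rw [← h] at hσ
  have hδ := baseDim_map_le (δ i.castSucc) x
  have := baseDim_le (X.map (δ i.castSucc).op x)
  rw [Reduces, dgn_eq_sub_baseDim, dgn_eq_sub_baseDim]
  omega

theorem ProperlyReduces.map_δ_succ {n : ℕ} {i : Fin (n + 1)} {x : X _⦋n + 1⦌}
    (h : ProperlyReduces X i x) : X.map (δ i.succ).op x = X.map (δ i.castSucc).op x := by
  conv_lhs => rw [h]
  rw [← map_op_comp_apply, δ_comp_σ_succ, op_id, Functor.map_id_apply]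

theorem exists_map_δ_eq_of_dgn_map_δ_lt {n : ℕ} (x : X _⦋n + 1⦌) (M : Fin (n + 2))
    (h : dgn X (X.map (δ M).op x) < dgn X x) :
    ∃ t : Fin (n + 1), (t.castSucc = M ∨ t.succ = M) ∧
      X.map (δ t.castSucc).op x = X.map (δ t.succ).op x := by
  obtain ⟨ε, -, z, hz⟩ := exists_eq_map_baseDim x
  have hsurj : Function.Surjective (δ M ≫ ε).toOrderHom := by
    by_contra hns
    have := baseDim_lt_of_eq_map (δ M ≫ ε) z (by rw [map_op_comp_apply, ← hz]) hns
    have := baseDim_le x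
    rw [dgn_eq_sub_baseDim, dgn_eq_sub_baseDim] at h
    omega
  obtain ⟨i, hi⟩ := hsurj (ε.toOrderHom M)
  obtain ⟨t, ht, hεt⟩ :=
    Monotone.exists_adjacent_eq ε.toOrderHom.monotone (M.succAbove_ne i) hi
  obtain ⟨ε', rfl⟩ := eq_σ_comp_of_not_injective' ε t hεt
  refine ⟨t, ht, ?_⟩
  rw [hz, ← map_op_comp_apply, ← map_op_comp_apply, ← Category.assoc, ← Category.assoc,
    δ_comp_σ_self, δ_comp_σ_succ]

theorem map_δ_eq_map_δ_add_one_of_dgn_lt {n M : ℕ} (x : X _⦋n + 1⦌) (hM : M + 1 < n + 2)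
    (hlt : dgn X (X.map (δ ⟨M, by omega⟩).op x) < dgn X x)
    (hprev : ∀ t : Fin (n + 2), (t : ℕ) + 1 = M →
      X.map (δ t).op x ≠ X.map (δ ⟨M, by omega⟩).op x) :
    X.map (δ ⟨M, by omega⟩).op x = X.map (δ ⟨M + 1, hM⟩).op x := by
  obtain ⟨⟨t, ht⟩, hpos | hpos, hface⟩ := exists_map_δ_eq_of_dgn_map_δ_lt x _ hlt
  · obtain rfl : t = M := congrArg Fin.val hpos
    exact hface
  · obtain rfl : t + 1 = M := congrArg Fin.val hpos
    exact absurd hface (hprev _ rfl)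

section Sphere

variable {K : ℕ} {c : Fin (K + 3) → X _⦋K + 1⦌}

theorem IsSphere.map_δ_eq (hc : IsSphere X c) {a b : ℕ} (hab : a ≤ b) (hb : b < K + 2) :
    X.map (δ ⟨a, by omega⟩).op (c ⟨b + 1, by omega⟩) =
      X.map (δ ⟨b, hb⟩).op (c ⟨a, by omega⟩) :=
  hc ⟨a, by omega⟩ ⟨b, hb⟩ hab

theorem IsSphere.map_δ_eq_of_lt (hc : IsSphere X c) {M J : ℕ} (hMJ : M < J) (hJ : J < K + 1)
    (hlt : ∀ b, dgn X (X.map (δ ⟨J, by omega⟩).op (c ⟨M, by omega⟩)) < dgn X (c b))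
    (hfresh : ∀ a (ha : a < M) l,
      X.map (δ l).op (c ⟨a, by omega⟩) ≠ X.map (δ ⟨J, by omega⟩).op (c ⟨M, by omega⟩)) :
    X.map (δ ⟨J, by omega⟩).op (c ⟨M, by omega⟩) =
      X.map (δ ⟨J, by omega⟩).op (c ⟨M + 1, by omega⟩) := by
  rw [← hc.map_δ_eq hMJ.le (by omega), ← hc.map_δ_eq hMJ (by omega)]
  refine map_δ_eq_map_δ_add_one_of_dgn_lt _ (by omega) ?_ ?_
  · rw [hc.map_δ_eq hMJ.le (by omega)]
    exact hlt _
  · rintro ⟨t, ht⟩ (rfl : t + 1 = M)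
    rw [hc.map_δ_eq (by omega : t ≤ J) (by omega), hc.map_δ_eq hMJ.le (by omega)]
    exact hfresh t (by omega) _

theorem IsSphere.map_δ_eq_of_add_one_lt (hc : IsSphere X c) {M J : ℕ} (hJM : J + 1 < M)
    (hM : M < K + 2)
    (hlt : ∀ b, dgn X (X.map (δ ⟨J, by omega⟩).op (c ⟨M, by omega⟩)) < dgn X (c b))
    (hfresh : ∀ a (ha : a < M) l,
      X.map (δ l).op (c ⟨a, by omega⟩) ≠ X.map (δ ⟨J, by omega⟩).op (c ⟨M, by omega⟩)) :
    X.map (δ ⟨J, by omega⟩).op (c ⟨M, by omega⟩) =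
      X.map (δ ⟨J, by omega⟩).op (c ⟨M + 1, by omega⟩) := by
  obtain ⟨N, rfl⟩ : ∃ N, M = N + 1 := ⟨M - 1, by omega⟩
  rw [hc.map_δ_eq (by omega : J ≤ N) (by omega), hc.map_δ_eq (by omega : J ≤ N + 1) hM]
  refine map_δ_eq_map_δ_add_one_of_dgn_lt _ hM ?_ ?_
  · rw [← hc.map_δ_eq (by omega : J ≤ N) (by omega)]
    exact hlt _
  · rintro ⟨t, ht⟩ (rfl : t + 1 = N)
    rw [← hc.map_δ_eq (by omega : J ≤ t) (by omega),
      ← hc.map_δ_eq (by omega : J ≤ t + 1) (by omega)]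
    exact hfresh (t + 1) (by omega) _

end Sphere

end

theorem mplus1_b_general (X : SSet) (K : ℕ) (c : Fin (K + 3) → X _⦋K + 1⦌) (hc : IsSphere X c)
    (r : ℕ) (hr : ∀ u : Fin (K + 3), r ≤ dgn X (c u))
    (m : Fin (K + 3)) (hm : dgn X (c m) = r)
    (hmmin : ∀ u : Fin (K + 3), dgn X (c u) = r → m ≤ u)
    (hm1 : (m : ℕ) + 1 < K + 3) (j : Fin (K + 1))
    (hj1 : ProperlyReduces X j (c m))
    (hj2 : ProperlyReduces X j (c ⟨(m : ℕ) + 1, hm1⟩)) :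
    c m = c ⟨(m : ℕ) + 1, hm1⟩ := by
  obtain ⟨M, hM⟩ := m
  obtain ⟨J, hJ⟩ := j
  have hM1 : M + 1 < K + 3 := hm1
  suffices hface : X.map (δ ⟨J, by omega⟩).op (c ⟨M, hM⟩) =
      X.map (δ ⟨J, by omega⟩).op (c ⟨M + 1, hm1⟩) by
    rw [hj1, hj2]
    exact congrArg _ hface
  have hy : dgn X (X.map (δ ⟨J, by omega⟩).op (c ⟨M, hM⟩)) + 1 = r := hm ▸ hj1.reduces
  have hlt : ∀ b, dgn X (X.map (δ ⟨J, by omega⟩).op (c ⟨M, hM⟩)) < dgn X (c b) := fun b => by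
    have := hr b
    omega
  have hfresh : ∀ a (ha : a < M) l,
      X.map (δ l).op (c ⟨a, by omega⟩) ≠ X.map (δ ⟨J, by omega⟩).op (c ⟨M, hM⟩) := by
    intro a ha l hface
    have hdgn := dgn_le_dgn_map_δ_add_one (c ⟨a, by omega⟩) l
    rw [hface] at hdgn
    have := hmmin ⟨a, by omega⟩ (le_antisymm (by omega) (hr _))
    exact absurd this (by simpa using ha)
  rcases lt_trichotomy M J with hMJ | rfl | hJM
  · exact hc.map_δ_eq_of_lt hMJ hJ hlt hfresh
  · exact (hc.map_δ_eq le_rfl (by omega)).symm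
  · obtain rfl | hJM := (Nat.succ_le_of_lt hJM).eq_or_lt
    · exact hj1.map_δ_succ.symm.trans
        ((hc.map_δ_eq le_rfl (by omega)).symm.trans hj2.map_δ_succ)
    · exact hc.map_δ_eq_of_add_one_lt hJM (by omega) hlt hfresh

/-- If all faces of a sphere `c` have degeneracy at least 2, `r` is the minimal
degeneracy, `m` is the first face of degeneracy `r`, and some `j` properly reduces
both `c_m` and `c_{m+1}`, then `c_m = c_{m+1}`. -/
theorem mplus1_b (X : SSet) (K : ℕ) (c : Fin (K + 3) → X _⦋K + 1⦌) (hc : IsSphere X c)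
    (r : ℕ) (hr : ∀ u : Fin (K + 3), r ≤ dgn X (c u))
    (m : Fin (K + 3)) (hm : dgn X (c m) = r)
    (hmmin : ∀ u : Fin (K + 3), dgn X (c u) = r → m ≤ u)
    (hdeg : ∀ u : Fin (K + 3), 2 ≤ dgn X (c u))
    (hm1 : (m : ℕ) + 1 < K + 3) (j : Fin (K + 1))
    (hj1 : ProperlyReduces X j (c m))
    (hj2 : ProperlyReduces X j (c ⟨(m : ℕ) + 1, hm1⟩)) :
    c m = c ⟨(m : ℕ) + 1, hm1⟩ :=
  mplus1_b_general X K c hc r hr m hm hmmin hm1 j hj1 hj2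

end AufhebungSSet
end
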